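/- arXiv:1904.11076 — 3 statements merged into one kernel-verified Lean document; each statement's English description precedes it below -/
import Mathlib

section
/- Let X ⊆ ℝⁿ be nonempty, closed, convex, and let F : ℝⁿ → ℝⁿ be monotone. Suppose x* solves VI(X,F), the weak sharpness condition holds with constant α > 0 (i.e., for all x ∈ X, F(x*)ᵀ(x − x*) ≥ α·dist(x, X*)), and ‖F(x*)‖ ≤ C. Then for all x ∈ ℝⁿ: F(x)ᵀ(x − x*) ≥ α·dist(Π_X(x), X*) − C·dist(x, X). -/
/-!
Write `p = Π_X(x)`. Monotonicity gives `⟪F x, x - x*⟫ ≥ ⟪F x*, x - x*⟫`, and splitting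
`x - x* = (p - x*) + (x - p)` bounds the right side below by `⟪F x*, p - x*⟫ - ‖F x*‖ ‖x - p‖`.
Weak sharpness at `p ∈ X` controls the first term by `α · dist(p, X*)`, and `‖x - p‖ = dist(x, X)`.
-/

open Metric

theorem norm_sub_le_infDist_of_forall_norm_sub_le {E : Type*} [NormedAddCommGroup E]
    {s : Set E} {x p : E} (hp : p ∈ s) (hmin : ∀ w ∈ s, ‖x - p‖ ≤ ‖x - w‖) :
    ‖x - p‖ ≤ infDist x s :=
  (le_infDist ⟨p, hp⟩).2 fun w hw => by simpa only [dist_eq_norm] using hmin w hw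

section InnerProduct

variable {E : Type*} [NormedAddCommGroup E] [InnerProductSpace ℝ E]

theorem inner_sub_sub_le_inner_of_monotone {F : E → E}
    (hmono : ∀ x y, 0 ≤ inner ℝ (F x - F y) (x - y)) (x y : E) :
    inner ℝ (F y) (x - y) ≤ inner ℝ (F x) (x - y) := by
  have h := hmono x y
  rw [inner_sub_left] at h
  linarith

theorem inner_sub_sub_norm_mul_le_inner (v x y p : E) :
    inner ℝ v (p - y) - ‖v‖ * ‖x - p‖ ≤ inner ℝ v (x - y) := by
  have hsplit : inner ℝ v (x - y) = inner ℝ v (p - y) - inner ℝ v (p - x) := by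
    rw [← inner_sub_right, sub_sub_sub_cancel_left]
  have hcs := real_inner_le_norm v (p - x)
  rw [← norm_neg (p - x), neg_sub] at hcs
  linarith

end InnerProduct

theorem stmt_2_general {n : ℕ} (X : Set (EuclideanSpace ℝ (Fin n)))
    (F : EuclideanSpace ℝ (Fin n) → EuclideanSpace ℝ (Fin n))
    (hmono : ∀ x y, 0 ≤ (inner ℝ (F x - F y) ( x - y) : ℝ))
    (Xstar : Set (EuclideanSpace ℝ (Fin n)))
    (P : EuclideanSpace ℝ (Fin n) → EuclideanSpace ℝ (Fin n))
    (hP : ∀ z, P z ∈ X ∧ ∀ w ∈ X, ‖z - P z‖ ≤ ‖z - w‖)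
    (xs : EuclideanSpace ℝ (Fin n))
    (α : ℝ)
    (hws : ∀ x ∈ X, α * Metric.infDist x Xstar ≤ (inner ℝ (F xs) ( x - xs) : ℝ))
    (C : ℝ) (hC : ‖F xs‖ ≤ C) :
    ∀ x, α * Metric.infDist (P x) Xstar - C * Metric.infDist x X ≤ (inner ℝ (F x) ( x - xs) : ℝ) := by
  intro x
  obtain ⟨hPX, hPmin⟩ := hP x
  have hproj : ‖x - P x‖ ≤ infDist x X := norm_sub_le_infDist_of_forall_norm_sub_le hPX hPmin
  have hnorm : ‖F xs‖ * ‖x - P x‖ ≤ C * infDist x X :=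
    mul_le_mul hC hproj (norm_nonneg _) ((norm_nonneg _).trans hC)
  calc α * infDist (P x) Xstar - C * infDist x X
      ≤ inner ℝ (F xs) (P x - xs) - ‖F xs‖ * ‖x - P x‖ := by linarith [hws (P x) hPX]
    _ ≤ inner ℝ (F xs) (x - xs) := inner_sub_sub_norm_mul_le_inner _ _ _ _
    _ ≤ inner ℝ (F x) (x - xs) := inner_sub_sub_le_inner_of_monotone hmono x xs

theorem stmt_2 {n : ℕ} (X : Set (EuclideanSpace ℝ (Fin n)))
    (F : EuclideanSpace ℝ (Fin n) → EuclideanSpace ℝ (Fin n))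
    (hXne : X.Nonempty) (hXcl : IsClosed X) (hXcv : Convex ℝ X)
    (hmono : ∀ x y, 0 ≤ (inner ℝ (F x - F y) ( x - y) : ℝ))
    (Xstar : Set (EuclideanSpace ℝ (Fin n)))
    (hXstar : Xstar = {z | z ∈ X ∧ ∀ y ∈ X, 0 ≤ (inner ℝ (F z) ( y - z) : ℝ)})
    (P : EuclideanSpace ℝ (Fin n) → EuclideanSpace ℝ (Fin n))
    (hP : ∀ z, P z ∈ X ∧ ∀ w ∈ X, ‖z - P z‖ ≤ ‖z - w‖)
    (xs : EuclideanSpace ℝ (Fin n)) (hxs : xs ∈ Xstar)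
    (α : ℝ) (hα : 0 < α)
    (hws : ∀ x ∈ X, α * Metric.infDist x Xstar ≤ (inner ℝ (F xs) ( x - xs) : ℝ))
    (C : ℝ) (hC : ‖F xs‖ ≤ C) :
    ∀ x, α * Metric.infDist (P x) Xstar - C * Metric.infDist x X ≤ (inner ℝ (F x) ( x - xs) : ℝ) :=
  stmt_2_general X F hmono Xstar P hP xs α hws C hC
end

section
/- Let β ∈ (0,1), R ≥ 0, and let {δ_k}, {α_k} be nonnegative sequences with δ_{k+1} ≤ (1−β)δ_k + R·α_k² for all k ≥ 0. If there is k̄ ≥ 0 such that α_{k+1}² ≥ (1 − β/2)·α_k² for all k ≥ k̄, then for all k: δ_k ≤ (2R/β)·α_k² + δ_0·(1−β)ᵏ + (R·Σ_{t=0}^{k̄} α_t²)·(1−β)^{k−k̄}. -/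
theorem stmt_9 (β R : ℝ) (hβ : β ∈ Set.Ioo (0 : ℝ) 1) (hR : 0 ≤ R)
    (δ α : ℕ → ℝ) (hδ : ∀ k, 0 ≤ δ k) (hα : ∀ k, 0 ≤ α k)
    (hrec : ∀ k, δ (k + 1) ≤ (1 - β) * δ k + R * α k ^ 2)
    (kbar : ℕ) (hk : ∀ k, kbar ≤ k → (1 - β / 2) * α k ^ 2 ≤ α (k + 1) ^ 2) :
    ∀ k, δ k ≤ (2 * R / β) * α k ^ 2 + δ 0 * (1 - β) ^ k
      + (R * ∑ t ∈ Finset.range (kbar + 1), α t ^ 2) * (1 - β) ^ ((k : ℤ) - kbar) := by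
  obtain ⟨hβ0, hβ1⟩ := hβ
  have hb0 : (0:ℝ) < 1 - β := by linarith
  have hb1 : (1:ℝ) - β ≤ 1 := by linarith
  have hSsum : 0 ≤ ∑ t ∈ Finset.range (kbar + 1), α t ^ 2 :=
    Finset.sum_nonneg fun t _ => sq_nonneg _
  have hS : 0 ≤ R * ∑ t ∈ Finset.range (kbar + 1), α t ^ 2 := mul_nonneg hR hSsum
  have hcoef : 0 ≤ 2 * R / β := by positivity
  -- simple unrolled bound
  have lemB : ∀ k, δ k ≤ δ 0 * (1 - β) ^ k + R * ∑ t ∈ Finset.range k, α t ^ 2 := by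
    intro k
    induction k with
    | zero => simp
    | succ n ih =>
      have hsn : 0 ≤ R * ∑ t ∈ Finset.range n, α t ^ 2 :=
        mul_nonneg hR (Finset.sum_nonneg fun t _ => sq_nonneg _)
      have h1 : δ (n+1) ≤ (1-β) * (δ 0 * (1-β)^n + R * ∑ t ∈ Finset.range n, α t ^ 2)
          + R * α n ^ 2 :=
        (hrec n).trans (by nlinarith)
      rw [Finset.sum_range_succ]
      have e : (1-β) * (δ 0 * (1-β)^n) = δ 0 * (1-β)^(n+1) := by ring
      have h2 : (1-β) * (R * ∑ t ∈ Finset.range n, α t ^ 2)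
          ≤ R * ∑ t ∈ Finset.range n, α t ^ 2 := mul_le_of_le_one_left hsn hb1
      nlinarith
  -- bound for k ≤ kbar
  have lemC : ∀ k, k ≤ kbar → δ k ≤ (2 * R / β) * α k ^ 2 + δ 0 * (1 - β) ^ k
      + (R * ∑ t ∈ Finset.range (kbar + 1), α t ^ 2) * (1 - β) ^ ((k : ℤ) - kbar) := by
    intro k hkle
    have hsub : R * ∑ t ∈ Finset.range k, α t ^ 2
        ≤ R * ∑ t ∈ Finset.range (kbar + 1), α t ^ 2 := by
      apply mul_le_mul_of_nonneg_left _ hR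
      exact Finset.sum_le_sum_of_subset_of_nonneg
        (Finset.range_subset_range.mpr (by omega)) (fun t _ _ => sq_nonneg _)
    have hzpow : (1:ℝ) ≤ (1 - β) ^ ((k : ℤ) - kbar) :=
      one_le_zpow_of_nonpos₀ hb0 hb1 (by omega)
    have h2 : R * ∑ t ∈ Finset.range (kbar + 1), α t ^ 2
        ≤ (R * ∑ t ∈ Finset.range (kbar + 1), α t ^ 2) * (1 - β) ^ ((k : ℤ) - kbar) :=
      le_mul_of_one_le_right hS hzpow
    have h3 := lemB k
    have h4 : 0 ≤ (2 * R / β) * α k ^ 2 := mul_nonneg hcoef (sq_nonneg _)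
    linarith
  intro k
  rcases le_or_gt k kbar with hle | hgt
  · exact lemC k hle
  · -- induction from kbar
    have key : ∀ m, kbar ≤ m → δ m ≤ (2 * R / β) * α m ^ 2 + δ 0 * (1 - β) ^ m
        + (R * ∑ t ∈ Finset.range (kbar + 1), α t ^ 2) * (1 - β) ^ ((m : ℤ) - kbar) := by
      intro m hm
      induction m, hm using Nat.le_induction with
      | base => exact lemC kbar le_rfl
      | succ n hn ih =>
        have h1 : δ (n+1) ≤ (1-β) * ((2 * R / β) * α n ^ 2 + δ 0 * (1 - β) ^ n
            + (R * ∑ t ∈ Finset.range (kbar + 1), α t ^ 2) * (1 - β) ^ ((n : ℤ) - kbar))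
            + R * α n ^ 2 :=
          (hrec n).trans (by nlinarith)
        have hcoefeq : (1-β) * ((2 * R / β) * α n ^ 2) + R * α n ^ 2
            = (2 * R / β) * ((1 - β / 2) * α n ^ 2) := by
          field_simp
          ring
        have h2 : (2 * R / β) * ((1 - β / 2) * α n ^ 2) ≤ (2 * R / β) * α (n+1) ^ 2 :=
          mul_le_mul_of_nonneg_left (hk n hn) hcoef
        have hzp : (1-β) * (1 - β) ^ ((n : ℤ) - kbar) = (1 - β) ^ (((n:ℕ)+1 : ℤ) - kbar) := by
          rw [show ((n:ℕ)+1 : ℤ) - kbar = ((n:ℤ) - kbar) + 1 by ring,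
            zpow_add_one₀ hb0.ne']
          ring
        have hS' : 0 ≤ (R * ∑ t ∈ Finset.range (kbar + 1), α t ^ 2)
            * (1 - β) ^ ((n : ℤ) - kbar) :=
          mul_nonneg hS (zpow_nonneg hb0.le _)
        calc δ (n+1) ≤ (1-β) * ((2 * R / β) * α n ^ 2) + δ 0 * (1-β)^(n+1)
              + (R * ∑ t ∈ Finset.range (kbar + 1), α t ^ 2)
                * ((1-β) * (1 - β) ^ ((n : ℤ) - kbar)) + R * α n ^ 2 := by
              ring_nf at h1 ⊢; linarith
          _ ≤ (2 * R / β) * α (n+1) ^ 2 + δ 0 * (1-β)^(n+1)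
              + (R * ∑ t ∈ Finset.range (kbar + 1), α t ^ 2)
                * (1 - β) ^ (((n:ℕ)+1 : ℤ) - kbar) := by
              rw [← hzp]
              nlinarith [hcoefeq]
          _ = _ := by push_cast; ring_nf
    exact key k hgt.le
end

section
/- Let X ⊆ ℝⁿ be nonempty closed convex, F : ℝⁿ → ℝⁿ be L-Lipschitz and monotone, and γ > 0 with 2γ²L² ≤ 1. Given x_k ∈ X, set x_{k+1/2} = Π_X(x_k − γF(x_k)) and let x_{k+1} = Π_C(x_k − γF(x_{k+1/2})) where C = {y : (x_k − γF(x_k) − x_{k+1/2})ᵀ(y − x_{k+1/2}) ≤ 0}. Then for every solution x* of VI(X,F): ‖x_{k+1} − x*‖² ≤ ‖x_k − x*‖² − (1 − 2γ²L²)‖x_k − x_{k+1/2}‖². -/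
/-!
Projecting `xₖ - γ F(x_{k+1/2})` onto the halfspace `C ∋ x*` gives the three-point inequality
`‖x_{k+1} - x*‖² ≤ ‖xₖ - γ F(x_{k+1/2}) - x*‖² - ‖xₖ - γ F(x_{k+1/2}) - x_{k+1}‖²`.
Monotonicity and the variational inequality at `x*` make `⟪F(x_{k+1/2}), x_{k+1/2} - x*⟫ ≥ 0`,
which leaves `‖xₖ - x*‖² - ‖xₖ - x_{k+1}‖² + 2γ⟪F(x_{k+1/2}), x_{k+1/2} - x_{k+1}⟫`.
Since `x_{k+1} ∈ C`, the remaining error is `2γ⟪F(x_{k+1/2}) - F(xₖ), x_{k+1/2} - x_{k+1}⟫`,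
which the Lipschitz bound and `2ab ≤ a² + b²` absorb at the cost of `γ²L²‖xₖ - x_{k+1/2}‖²`.
-/

open scoped InnerProductSpace

section

variable {E : Type*} [NormedAddCommGroup E] [InnerProductSpace ℝ E]

theorem real_inner_sub_le_zero_of_forall_norm_sub_le {K : Set E} (hK : Convex ℝ K) {u p : E}
    (hp : p ∈ K) (hmin : ∀ w ∈ K, ‖u - p‖ ≤ ‖u - w‖) {w : E} (hw : w ∈ K) :
    ⟪u - p, w - p⟫_ℝ ≤ 0 := by
  have : Nonempty K := ⟨⟨p, hp⟩⟩
  have hinf : ‖u - p‖ = ⨅ w : K, ‖u - (w : E)‖ :=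
    le_antisymm (le_ciInf fun w => hmin w w.2)
      (ciInf_le (f := fun w : K => ‖u - (w : E)‖) ⟨0, by rintro _ ⟨w, rfl⟩; positivity⟩ ⟨p, hp⟩)
  exact (norm_eq_iInf_iff_real_inner_le_zero hK hp).1 hinf w hw

theorem norm_sub_sq_add_norm_sub_sq_le_of_real_inner_le_zero {u p w : E}
    (h : ⟪u - p, w - p⟫_ℝ ≤ 0) : ‖u - p‖ ^ 2 + ‖p - w‖ ^ 2 ≤ ‖u - w‖ ^ 2 := by
  have hsplit := norm_add_sq_real (u - p) (p - w)
  rw [sub_add_sub_cancel] at hsplit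
  have : ⟪u - p, p - w⟫_ℝ = -⟪u - p, w - p⟫_ℝ := by rw [← inner_neg_right, neg_sub]
  linarith

theorem convex_setOf_real_inner_sub_le_zero (a b : E) : Convex ℝ {y : E | ⟪a, y - b⟫_ℝ ≤ 0} := by
  simpa only [inner_sub_right, sub_nonpos] using
    convex_halfSpace_le (f := fun y : E => ⟪a, y⟫_ℝ) (innerₛₗ ℝ a).isLinear ⟪a, b⟫_ℝ

theorem real_inner_apply_sub_nonneg_of_monotone {F : E → E} {X : Set E} {xs y : E}
    (hmono : ∀ x y, 0 ≤ ⟪F x - F y, x - y⟫_ℝ) (hsol : ∀ y ∈ X, 0 ≤ ⟪F xs, y - xs⟫_ℝ)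
    (hy : y ∈ X) :
    0 ≤ ⟪F y, y - xs⟫_ℝ := by
  have := hmono y xs
  rw [inner_sub_left] at this
  linarith [hsol y hy]

theorem mul_norm_sub_sq_le_norm_sub_sq_sub_real_inner {x xh xn g h : E} {γ L : ℝ}
    (hgh : ‖h - g‖ ≤ L * ‖x - xh‖) (hxn : ⟪x - γ • h - xh, xn - xh⟫_ℝ ≤ 0) :
    (1 - γ ^ 2 * L ^ 2) * ‖x - xh‖ ^ 2 ≤ ‖x - xn‖ ^ 2 - 2 * γ * ⟪g, xh - xn⟫_ℝ := by
  have ht : ‖γ • (g - h)‖ ≤ |γ| * (L * ‖x - xh‖) := by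
    rw [norm_smul, Real.norm_eq_abs, norm_sub_rev]; gcongr
  set d := xh - xn
  set t := ‖γ • (g - h)‖
  have ht_sq : t ^ 2 ≤ γ ^ 2 * L ^ 2 * ‖x - xh‖ ^ 2 := by
    calc t ^ 2 ≤ (|γ| * (L * ‖x - xh‖)) ^ 2 := by gcongr
      _ = γ ^ 2 * L ^ 2 * ‖x - xh‖ ^ 2 := by rw [mul_pow, sq_abs]; ring
  have hCS : ⟪γ • (g - h), d⟫_ℝ ≤ t * ‖d‖ := real_inner_le_norm _ _
  have hsplit : ‖x - xn‖ ^ 2 = ‖x - xh‖ ^ 2 + 2 * ⟪x - xh, d⟫_ℝ + ‖d‖ ^ 2 := by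
    rw [← norm_add_sq_real, sub_add_sub_cancel]
  have hxn' : ⟪x - γ • h - xh, xn - xh⟫_ℝ = γ * ⟪h, d⟫_ℝ - ⟪x - xh, d⟫_ℝ := by
    rw [← neg_sub xh xn, inner_neg_right, sub_right_comm, inner_sub_left, real_inner_smul_left]
    ring
  have hgh' : ⟪γ • (g - h), d⟫_ℝ = γ * ⟪g, d⟫_ℝ - γ * ⟪h, d⟫_ℝ := by
    rw [real_inner_smul_left, inner_sub_left, mul_sub]
  linarith [sq_nonneg (t - ‖d‖)]

theorem norm_sub_sq_le_of_extragradient_step {x xh xn xs g h : E} {γ L : ℝ} (hγ : 0 ≤ γ)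
    (hgh : ‖h - g‖ ≤ L * ‖x - xh‖) (hxn : ⟪x - γ • h - xh, xn - xh⟫_ℝ ≤ 0)
    (hproj : ⟪x - γ • g - xn, xs - xn⟫_ℝ ≤ 0) (hsol : 0 ≤ ⟪g, xh - xs⟫_ℝ) :
    ‖xn - xs‖ ^ 2 ≤ ‖x - xs‖ ^ 2 - (1 - γ ^ 2 * L ^ 2) * ‖x - xh‖ ^ 2 := by
  have hthree := norm_sub_sq_add_norm_sub_sq_le_of_real_inner_le_zero hproj
  have hbound := mul_norm_sub_sq_le_norm_sub_sq_sub_real_inner (g := g) hgh hxn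
  have hexpand (y : E) :
      ‖x - γ • g - y‖ ^ 2 = ‖x - y‖ ^ 2 - 2 * γ * ⟪g, x - y⟫_ℝ + γ ^ 2 * ‖g‖ ^ 2 := by
    rw [sub_right_comm, norm_sub_sq_real, real_inner_smul_right, norm_smul, Real.norm_eq_abs,
      mul_pow, sq_abs, real_inner_comm]
    ring
  have hsplit : γ * ⟪g, x - xn⟫_ℝ - γ * ⟪g, x - xs⟫_ℝ
      = γ * ⟪g, xh - xn⟫_ℝ - γ * ⟪g, xh - xs⟫_ℝ := by
    simp only [inner_sub_right]; ring
  rw [hexpand, hexpand] at hthree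
  linarith [mul_nonneg hγ hsol]

end

theorem stmt_17_general {n : ℕ} (X : Set (EuclideanSpace ℝ (Fin n)))
    (hXcv : Convex ℝ X)
    (F : EuclideanSpace ℝ (Fin n) → EuclideanSpace ℝ (Fin n))
    (L : ℝ) (hLip : ∀ x y, ‖F x - F y‖ ≤ L * ‖x - y‖)
    (hmono : ∀ x y, 0 ≤ (inner ℝ (F x - F y) ( x - y) : ℝ))
    (γ : ℝ) (hγ : 0 < γ)
    (PX : EuclideanSpace ℝ (Fin n) → EuclideanSpace ℝ (Fin n))
    (hPX : ∀ z, PX z ∈ X ∧ ∀ w ∈ X, ‖z - PX z‖ ≤ ‖z - w‖)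
    (xk xhalf xnext : EuclideanSpace ℝ (Fin n))
    (hxhalf : xhalf = PX (xk - γ • F xk))
    (C : Set (EuclideanSpace ℝ (Fin n)))
    (hCdef : C = {y | (inner ℝ ((xk - γ • F xk) - xhalf) ( y - xhalf) : ℝ) ≤ 0})
    (hxnext : xnext ∈ C ∧
      ∀ y ∈ C, ‖(xk - γ • F xhalf) - xnext‖ ≤ ‖(xk - γ • F xhalf) - y‖)
    (xs : EuclideanSpace ℝ (Fin n)) (hxs : xs ∈ X)
    (hxsSol : ∀ y ∈ X, 0 ≤ (inner ℝ (F xs) ( y - xs) : ℝ)) :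
    ‖xnext - xs‖ ^ 2 ≤ ‖xk - xs‖ ^ 2 - (1 - 2 * γ ^ 2 * L ^ 2) * ‖xk - xhalf‖ ^ 2 := by
  obtain ⟨hxhalfX, hxhalfMin⟩ := hPX (xk - γ • F xk)
  rw [← hxhalf] at hxhalfX hxhalfMin
  have hxsC : xs ∈ C := hCdef ▸
    real_inner_sub_le_zero_of_forall_norm_sub_le hXcv hxhalfX hxhalfMin hxs
  have hCcv : Convex ℝ C := hCdef ▸ convex_setOf_real_inner_sub_le_zero _ _
  have hxnextC : ⟪xk - γ • F xk - xhalf, xnext - xhalf⟫_ℝ ≤ 0 := by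
    simpa only [hCdef, Set.mem_ofPred_eq] using hxnext.1
  have hstep := norm_sub_sq_le_of_extragradient_step hγ.le (hLip xk xhalf) hxnextC
    (real_inner_sub_le_zero_of_forall_norm_sub_le hCcv hxnext.1 hxnext.2 hxsC)
    (real_inner_apply_sub_nonneg_of_monotone hmono hxsSol hxhalfX)
  have : 0 ≤ γ ^ 2 * L ^ 2 * ‖xk - xhalf‖ ^ 2 := by positivity
  linarith

theorem stmt_17 {n : ℕ} (X : Set (EuclideanSpace ℝ (Fin n)))
    (hXne : X.Nonempty) (hXcl : IsClosed X) (hXcv : Convex ℝ X)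
    (F : EuclideanSpace ℝ (Fin n) → EuclideanSpace ℝ (Fin n))
    (L : ℝ) (hLip : ∀ x y, ‖F x - F y‖ ≤ L * ‖x - y‖)
    (hmono : ∀ x y, 0 ≤ (inner ℝ (F x - F y) ( x - y) : ℝ))
    (γ : ℝ) (hγ : 0 < γ) (hγL : 2 * γ ^ 2 * L ^ 2 ≤ 1)
    (PX : EuclideanSpace ℝ (Fin n) → EuclideanSpace ℝ (Fin n))
    (hPX : ∀ z, PX z ∈ X ∧ ∀ w ∈ X, ‖z - PX z‖ ≤ ‖z - w‖)
    (xk xhalf xnext : EuclideanSpace ℝ (Fin n)) (hxk : xk ∈ X)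
    (hxhalf : xhalf = PX (xk - γ • F xk))
    (C : Set (EuclideanSpace ℝ (Fin n)))
    (hCdef : C = {y | (inner ℝ ((xk - γ • F xk) - xhalf) ( y - xhalf) : ℝ) ≤ 0})
    (hxnext : xnext ∈ C ∧
      ∀ y ∈ C, ‖(xk - γ • F xhalf) - xnext‖ ≤ ‖(xk - γ • F xhalf) - y‖)
    (xs : EuclideanSpace ℝ (Fin n)) (hxs : xs ∈ X)
    (hxsSol : ∀ y ∈ X, 0 ≤ (inner ℝ (F xs) ( y - xs) : ℝ)) :
    ‖xnext - xs‖ ^ 2 ≤ ‖xk - xs‖ ^ 2 - (1 - 2 * γ ^ 2 * L ^ 2) * ‖xk - xhalf‖ ^ 2 :=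
  stmt_17_general X hXcv F L hLip hmono γ hγ PX hPX xk xhalf xnext hxhalf C hCdef hxnext xs hxs
    hxsSol
end
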